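/- arXiv:2408.10076 — 7 statements merged into one kernel-verified Lean document; each statement's English description precedes it below -/
import Mathlib

section
/- For the segment area A₁(d,r) as above, the second partial derivative ∂²A₁/∂d² at (0,0) equals 2·cot(φ_C). -/
open Real

noncomputable def A1 (φC d r : ℝ) : ℝ :=
  (1 + r)^2 * Real.arccos (((1 + r) - (1 - Real.cos φC + d)) / (1 + r))
    - ((1 + r) - (1 - Real.cos φC + d)) * (1 + r)
      * Real.sin (Real.arccos (((1 + r) - (1 - Real.cos φC + d)) / (1 + r)))

lemma A1_eq (φC d : ℝ) :
    A1 φC d 0 = Real.arccos (Real.cos φC - d)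
      - (Real.cos φC - d) * Real.sqrt (1 - (Real.cos φC - d)^2) := by
  simp [A1, Real.sin_arccos]
  ring_nf

lemma sqrt_pos_of (c x : ℝ) (hx1 : -1 < x) (hx2 : x < 1) : (0:ℝ) < Real.sqrt (1 - x^2) := by
  apply Real.sqrt_pos.mpr; nlinarith

lemma deriv1 (c x : ℝ) (hx1 : -1 < c - x) (hx2 : c - x < 1) :
    HasDerivAt (fun d => Real.arccos (c - d) - (c - d) * Real.sqrt (1 - (c - d)^2))
      (2 * Real.sqrt (1 - (c - x)^2)) x := by
  have hs := sqrt_pos_of c (c-x) hx1 hx2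
  have hne : (1 : ℝ) - (c - x)^2 ≠ 0 := by nlinarith
  have hlin : HasDerivAt (fun d : ℝ => c - d) (-1) x := by
    simpa using ((hasDerivAt_id x).const_sub c)
  have h1 : HasDerivAt (fun d => Real.arccos (c - d))
      ((-(1 / Real.sqrt (1 - (c-x)^2))) * (-1)) x :=
    (Real.hasDerivAt_arccos (by linarith) (by linarith)).comp x hlin
  have hinner : HasDerivAt (fun d : ℝ => 1 - (c - d)^2) (-(2*(c-x)) * (-1)) x := by
    have := ((hlin.pow 2).const_sub 1)
    exact this.congr_deriv (by norm_num)
  have h2 : HasDerivAt (fun d => Real.sqrt (1 - (c - d)^2))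
      (1 / (2 * Real.sqrt (1 - (c-x)^2)) * (-(2*(c-x)) * (-1))) x :=
    (Real.hasDerivAt_sqrt hne).comp x hinner
  have h3 := ((hlin.mul h2).const_sub 0)
  have h4 := h1.sub (hlin.mul h2)
  refine h4.congr_deriv ?_
  have hsq : Real.sqrt (1 - (c-x)^2) * Real.sqrt (1 - (c-x)^2) = 1 - (c-x)^2 :=
    Real.mul_self_sqrt (by nlinarith)
  field_simp
  nlinarith [hsq, hs]

theorem d2A1_dd2 (φC : ℝ) (hφC : 0 < φC) (hφC' : φC < Real.pi / 2) :
    deriv (deriv (fun d => A1 φC d 0)) 0 = 2 * (Real.cos φC / Real.sin φC) := by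
  set c := Real.cos φC with hc
  have hc0 : 0 < c := Real.cos_pos_of_mem_Ioo ⟨by linarith [Real.pi_pos], hφC'⟩
  have hc1 : c < 1 := by
    rw [hc]
    have := Real.cos_lt_cos_of_nonneg_of_le_pi (le_refl 0) (by linarith [Real.pi_gt_three]) hφC
    simpa using this
  -- f = A1 φC · 0 pointwise
  have hfun : (fun d => A1 φC d 0) = fun d =>
      Real.arccos (c - d) - (c - d) * Real.sqrt (1 - (c - d)^2) := by
    funext d; exact A1_eq φC d
  -- deriv equals g near 0
  have hnear : ∀ x ∈ Set.Ioo (c - 1) (c + 1),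
      deriv (fun d => A1 φC d 0) x = 2 * Real.sqrt (1 - (c - x)^2) := by
    intro x hx
    rw [hfun]
    exact (deriv1 c x (by linarith [hx.2]) (by linarith [hx.1])).deriv
  have hmem : (0:ℝ) ∈ Set.Ioo (c - 1) (c + 1) := ⟨by linarith, by linarith⟩
  have hopen : Set.Ioo (c - 1) (c + 1) ∈ nhds (0:ℝ) :=
    isOpen_Ioo.mem_nhds hmem
  have hev : deriv (fun d => A1 φC d 0) =ᶠ[nhds (0:ℝ)]
      fun x => 2 * Real.sqrt (1 - (c - x)^2) :=
    Filter.eventuallyEq_of_mem hopen hnear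
  rw [hev.deriv_eq]
  -- now derivative of 2√(1-(c-x)²) at 0
  have hs := sqrt_pos_of c c (by linarith) hc1
  have hne : (1:ℝ) - c^2 ≠ 0 := by nlinarith
  have hlin : HasDerivAt (fun d : ℝ => c - d) (-1) 0 := by
    simpa using ((hasDerivAt_id (0:ℝ)).const_sub c)
  have hinner : HasDerivAt (fun d : ℝ => 1 - (c - d)^2) (-(2*(c-0)) * (-1)) 0 := by
    have := ((hlin.pow 2).const_sub 1)
    exact this.congr_deriv (by norm_num)
  have hne0 : (1:ℝ) - (c - 0)^2 ≠ 0 := by simpa using hne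
  have h2 : HasDerivAt (fun d => Real.sqrt (1 - (c - d)^2))
      (1 / (2 * Real.sqrt (1 - (c-0)^2)) * (-(2*(c-0)) * (-1))) 0 :=
    (Real.hasDerivAt_sqrt hne0).comp 0 hinner
  have h2' := h2.const_mul (2:ℝ)
  rw [h2'.deriv]
  have hsin : Real.sin φC = Real.sqrt (1 - c^2) := by
    rw [hc, ← Real.sin_eq_sqrt_one_sub_cos_sq (by linarith) (by linarith [Real.pi_pos, hφC'.le])]
  simp only [sub_zero]
  rw [hsin]
  field_simp
end

section
/- For the segment area A₁(d,r) as above, the mixed second partial derivative ∂²A₁/∂d∂r at (0,0) equals 2·(1 − cos(φ_C))/sin(φ_C). -/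
open Real in
lemma inner_deriv_A1 (φC : ℝ) (hφC : 0 < φC) (hφC' : φC < Real.pi / 2)
    (r : ℝ) (hr : |r| < 1/2) :
    deriv (fun d => A1 φC d r) 0
      = 2 * Real.sqrt ((1 - Real.cos φC) * (1 + Real.cos φC + 2*r)) := by
  have hrlb : -(1/2) < r := neg_lt_of_abs_lt hr
  have hrub : r < 1/2 := lt_of_abs_lt hr
  set c := Real.cos φC with hc
  have hc0 : 0 < c := Real.cos_pos_of_mem_Ioo ⟨by linarith [Real.pi_pos], hφC'⟩
  have hc1 : c < 1 := by
    have : Real.cos φC < Real.cos 0 := by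
      apply Real.cos_lt_cos_of_nonneg_of_le_pi le_rfl _ hφC
      linarith [Real.pi_pos, Real.pi_le_four]
    simpa using this
  have hR : (0:ℝ) < 1 + r := by linarith
  set u₀ : ℝ := (r + c) / (1 + r) with hu₀
  have hu1 : u₀ < 1 := by
    rw [hu₀, div_lt_one hR]; linarith
  have hu2 : -1 < u₀ := by
    rw [hu₀, lt_div_iff₀ hR]; nlinarith
  have h1u : 0 < 1 - u₀^2 := by nlinarith
  set S : ℝ := Real.sqrt (1 - u₀^2) with hS
  have hSpos : 0 < S := Real.sqrt_pos.mpr h1u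
  have hS2 : S^2 = 1 - u₀^2 := Real.sq_sqrt h1u.le
  -- rewrite the function
  have hfun : (fun d => A1 φC d r)
      = fun d => (1+r)^2 * Real.arccos ((r + c - d)/(1+r))
          - ((r + c - d)) * (1+r) * Real.sin (Real.arccos ((r + c - d)/(1+r))) := by
    funext d
    have key : (1+r) - (1 - c + d) = r + c - d := by ring
    simp only [A1, ← hc, key]
  rw [hfun]
  -- derivatives
  have hu : HasDerivAt (fun d : ℝ => (r + c - d)/(1+r)) (-1/(1+r)) 0 := by
    have h0 : HasDerivAt (fun d : ℝ => r + c - d) (-1) 0 := by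
      simpa using (hasDerivAt_id (0:ℝ)).const_sub (r + c)
    exact h0.div_const (1+r)
  have hu0 : (r + c - 0)/(1+r) = u₀ := by rw [sub_zero, hu₀]
  have harc : HasDerivAt (fun d => Real.arccos ((r + c - d)/(1+r)))
      (-(1/S) * (-1/(1+r))) 0 := by
    have ha := Real.hasDerivAt_arccos (x := u₀) (ne_of_gt hu2) (ne_of_lt hu1)
    rw [← hu0] at ha
    simpa [hS, hu₀, Function.comp_def] using ha.comp 0 hu
  have hsin : HasDerivAt (fun d => Real.sin (Real.arccos ((r + c - d)/(1+r))))
      (Real.cos (Real.arccos u₀) * (-(1/S) * (-1/(1+r)))) 0 := by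
    have h := (Real.hasDerivAt_sin (Real.arccos ((r + c - (0:ℝ))/(1+r)))).comp 0 harc
    rw [hu0] at h
    exact h
  have hlin : HasDerivAt (fun d : ℝ => (r + c - d) * (1+r)) (-1 * (1+r)) 0 := by
    have h0 : HasDerivAt (fun d : ℝ => r + c - d) (-1) 0 := by
      simpa using (hasDerivAt_id (0:ℝ)).const_sub (r + c)
    exact h0.mul_const (1+r)
  have hA : HasDerivAt
      (fun d => (1+r)^2 * Real.arccos ((r + c - d)/(1+r))
          - ((r + c - d)) * (1+r) * Real.sin (Real.arccos ((r + c - d)/(1+r))))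
      ((1+r)^2 * (-(1/S) * (-1/(1+r)))
        - ((-1 * (1+r)) * Real.sin (Real.arccos ((r + c - 0)/(1+r)))
           + (r + c - 0) * (1+r) * (Real.cos (Real.arccos u₀) * (-(1/S) * (-1/(1+r)))))) 0 := by
    exact (harc.const_mul ((1+r)^2)).sub (hlin.mul hsin)
  rw [hA.deriv, hu0, Real.sin_arccos, Real.cos_arccos hu2.le hu1.le, ← hS, sub_zero]
  -- now pure algebra
  have hrc : u₀ * (1 + r) = r + c := by
    rw [hu₀]; field_simp
  have hsqrt : Real.sqrt ((1 - c) * (1 + c + 2*r)) = (1+r) * S := by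
    have h1 : (1 - c) * (1 + c + 2*r) = (1+r)^2 * (1 - u₀^2) := by
      have : (1+r)^2 * (1 - u₀^2) = (1+r)^2 - (u₀*(1+r))^2 := by ring
      rw [this, hrc]; ring
    rw [h1, hS, Real.sqrt_mul (sq_nonneg _), Real.sqrt_sq hR.le]
  rw [hsqrt]
  field_simp
  nlinarith [hS2, hrc, hSpos, hR, sq_nonneg S, sq_nonneg (S*(1+r))]

open Real in
theorem d2A1_dddr (φC : ℝ) (hφC : 0 < φC) (hφC' : φC < Real.pi / 2) :
    deriv (fun r => deriv (fun d => A1 φC d r) 0) 0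
      = 2 * (1 - Real.cos φC) / Real.sin φC := by
  set c := Real.cos φC with hc
  have hc0 : 0 < c := Real.cos_pos_of_mem_Ioo ⟨by linarith [Real.pi_pos], hφC'⟩
  have hc1 : c < 1 := by
    have : Real.cos φC < Real.cos 0 := by
      apply Real.cos_lt_cos_of_nonneg_of_le_pi le_rfl _ hφC
      linarith [Real.pi_pos, Real.pi_le_four]
    simpa using this
  have hsinpos : 0 < Real.sin φC := Real.sin_pos_of_pos_of_lt_pi hφC
    (by linarith [Real.pi_pos])
  have hEq : (fun r => deriv (fun d => A1 φC d r) 0)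
      =ᶠ[nhds (0:ℝ)] (fun r => 2 * Real.sqrt ((1 - c) * (1 + c + 2*r))) := by
    filter_upwards [Metric.ball_mem_nhds (0:ℝ) (by norm_num : (0:ℝ) < 1/2)] with r hr
    exact inner_deriv_A1 φC hφC hφC' r (by simpa [Real.dist_eq] using hr)
  rw [hEq.deriv_eq]
  have hg : HasDerivAt (fun r : ℝ => (1 - c) * (1 + c + 2*r)) ((1 - c) * 2) 0 := by
    have h1 : HasDerivAt (fun r : ℝ => 1 + c + 2*r) 2 0 := by
      simpa using ((hasDerivAt_id (0:ℝ)).const_mul (2:ℝ)).const_add (1 + c)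
    exact h1.const_mul (1 - c)
  have hne : (1 - c) * (1 + c + 2*(0:ℝ)) ≠ 0 := by nlinarith
  have hgs : HasDerivAt (fun r : ℝ => 2 * Real.sqrt ((1 - c) * (1 + c + 2*r)))
      (2 * (1 / (2 * Real.sqrt ((1 - c) * (1 + c + 2*(0:ℝ)))) * ((1 - c) * 2))) 0 := by
    exact ((Real.hasDerivAt_sqrt hne).comp 0 hg).const_mul 2
  rw [hgs.deriv]
  have hsq : Real.sqrt ((1 - c) * (1 + c + 2*(0:ℝ))) = Real.sin φC := by
    have h1 : (1 - c) * (1 + c + 2*(0:ℝ)) = Real.sin φC ^ 2 := by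
      have := Real.sin_sq_add_cos_sq φC
      rw [← hc] at this; nlinarith
    rw [h1, Real.sqrt_sq hsinpos.le]
  rw [hsq]
  field_simp
end

section
/- For the segment area A₁(d,r) as above, the second partial derivative ∂²A₁/∂r² at (0,0) equals 2·(φ_C − 2·(1 − cos(φ_C))/sin(φ_C)). -/
open Real

lemma aux_deriv1 (c : ℝ) (hc0 : 0 < c) (hc1 : c < 1) (r : ℝ) (hr : |r| < 1/2) :
    HasDerivAt (fun r : ℝ => (1+r)^2 * Real.arccos ((r+c)/(1+r))
        - (r+c)*(1+r) * Real.sqrt (1 - ((r+c)/(1+r))^2))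
      (2*(1+r)*(Real.arccos ((r+c)/(1+r)) - ((r+c)/(1+r)) * Real.sqrt (1 - ((r+c)/(1+r))^2))
        - 2*(1-c) * Real.sqrt (1 - ((r+c)/(1+r))^2)) r := by
  rw [abs_lt] at hr
  have hRpos : (0:ℝ) < 1 + r := by linarith
  have hR : (1:ℝ) + r ≠ 0 := hRpos.ne'
  set x := (r + c) / (1 + r) with hx
  have hx1 : x < 1 := by
    rw [hx, div_lt_one hRpos]; linarith
  have hx2 : -1 < x := by
    rw [hx, lt_div_iff₀ hRpos]; linarith
  have hxsq : 0 < 1 - x^2 := by nlinarith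
  set q := Real.sqrt (1 - x^2) with hqdef
  have hqpos : 0 < q := Real.sqrt_pos.mpr hxsq
  have hq2 : q^2 = 1 - x^2 := Real.sq_sqrt hxsq.le
  have hu : HasDerivAt (fun r : ℝ => (r + c) / (1 + r)) ((1 - c) / (1 + r)^2) r := by
    have h := ((hasDerivAt_id' r).add_const c).div (((hasDerivAt_id' r).const_add 1)) hR
    refine h.congr_deriv (Eq.symm ?_); field_simp; ring
  have harccos : HasDerivAt (fun r : ℝ => Real.arccos ((r+c)/(1+r)))
      (-(1 / q) * ((1 - c) / (1 + r)^2)) r :=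
    (Real.hasDerivAt_arccos hx2.ne' hx1.ne).comp (h := fun r : ℝ => (r+c)/(1+r)) r hu
  have hinner : HasDerivAt (fun r : ℝ => 1 - ((r+c)/(1+r))^2)
      (-(2 * x * ((1 - c) / (1 + r)^2))) r := by
    have h := ((hu.pow 2).const_sub 1)
    refine h.congr_deriv (Eq.symm ?_)
    simp [hx]
  have hsqrt : HasDerivAt (fun r : ℝ => Real.sqrt (1 - ((r+c)/(1+r))^2))
      ((-(2 * x * ((1 - c) / (1 + r)^2))) * (1 / (2 * q))) r := by
    have h := (Real.hasDerivAt_sqrt hxsq.ne').comp r hinner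
    refine h.congr_deriv (Eq.symm ?_)
    ring
  have h1 : HasDerivAt (fun r : ℝ => (1+r)^2 * Real.arccos ((r+c)/(1+r)))
      (2*(1+r) * Real.arccos ((r+c)/(1+r)) + (1+r)^2 * (-(1 / q) * ((1 - c) / (1 + r)^2))) r := by
    have hp : HasDerivAt (fun r : ℝ => (1+r)^2) (2*(1+r)) r := by
      have h := ((hasDerivAt_id' r).const_add (1:ℝ)).pow 2
      refine h.congr_deriv (Eq.symm ?_); simp
    exact hp.mul harccos
  have h2 : HasDerivAt (fun r : ℝ => (r+c)*(1+r) * Real.sqrt (1 - ((r+c)/(1+r))^2))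
      ((1*(1+r) + (r+c)*1) * q + (r+c)*(1+r) * ((-(2 * x * ((1 - c) / (1 + r)^2))) * (1 / (2 * q)))) r := by
    have hp : HasDerivAt (fun r : ℝ => (r+c)*(1+r)) (1*(1+r) + (r+c)*1) r :=
      ((hasDerivAt_id' r).add_const c).mul (((hasDerivAt_id' r).const_add 1))
    exact hp.mul hsqrt
  have h := h1.sub h2
  refine h.congr_deriv (Eq.symm ?_)
  have hxr : r + c = x * (1 + r) := by rw [hx, div_mul_cancel₀ _ hR]
  have hcx : 1 - c = (1 + r) * (1 - x) := by linear_combination -hxr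
  rw [← hx, hxr, hcx]
  clear_value x q
  field_simp
  linear_combination (x - 1) * hq2

open Real

lemma aux_deriv2 (c : ℝ) (hc0 : 0 < c) (hc1 : c < 1) (r : ℝ) (hr : |r| < 1/2) :
    HasDerivAt (fun r : ℝ => 2*(1+r)*(Real.arccos ((r+c)/(1+r))
        - ((r+c)/(1+r)) * Real.sqrt (1 - ((r+c)/(1+r))^2))
        - 2*(1-c) * Real.sqrt (1 - ((r+c)/(1+r))^2))
      (2*(Real.arccos ((r+c)/(1+r)) - ((r+c)/(1+r)) * Real.sqrt (1 - ((r+c)/(1+r))^2))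
        + 2*(1+r) * (-(1 / Real.sqrt (1 - ((r+c)/(1+r))^2)) * ((1 - c) / (1 + r)^2)
          - (((1 - c) / (1 + r)^2) * Real.sqrt (1 - ((r+c)/(1+r))^2)
            + ((r+c)/(1+r)) * ((-(2 * ((r+c)/(1+r)) * ((1 - c) / (1 + r)^2))) * (1 / (2 * Real.sqrt (1 - ((r+c)/(1+r))^2))))))
        - 2*(1-c) * ((-(2 * ((r+c)/(1+r)) * ((1 - c) / (1 + r)^2))) * (1 / (2 * Real.sqrt (1 - ((r+c)/(1+r))^2))))) r := by
  rw [abs_lt] at hr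
  have hRpos : (0:ℝ) < 1 + r := by linarith
  have hR : (1:ℝ) + r ≠ 0 := hRpos.ne'
  have hx1 : (r + c) / (1 + r) < 1 := by
    rw [div_lt_one hRpos]; linarith
  have hx2 : -1 < (r + c) / (1 + r) := by
    rw [lt_div_iff₀ hRpos]; linarith
  have hxsq : 0 < 1 - ((r + c) / (1 + r))^2 := by nlinarith
  have hu : HasDerivAt (fun r : ℝ => (r + c) / (1 + r)) ((1 - c) / (1 + r)^2) r := by
    have h := ((hasDerivAt_id' r).add_const c).div ((hasDerivAt_id' r).const_add 1) hR
    refine h.congr_deriv (Eq.symm ?_); field_simp; ring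
  have harccos : HasDerivAt (fun r : ℝ => Real.arccos ((r+c)/(1+r)))
      (-(1 / Real.sqrt (1 - ((r+c)/(1+r))^2)) * ((1 - c) / (1 + r)^2)) r :=
    (Real.hasDerivAt_arccos hx2.ne' hx1.ne).comp (h := fun r : ℝ => (r+c)/(1+r)) r hu
  have hinner : HasDerivAt (fun r : ℝ => 1 - ((r+c)/(1+r))^2)
      (-(2 * ((r+c)/(1+r)) * ((1 - c) / (1 + r)^2))) r := by
    have h := ((hu.pow 2).const_sub 1)
    refine h.congr_deriv (Eq.symm ?_)
    ring
  have hsqrt : HasDerivAt (fun r : ℝ => Real.sqrt (1 - ((r+c)/(1+r))^2))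
      ((-(2 * ((r+c)/(1+r)) * ((1 - c) / (1 + r)^2))) * (1 / (2 * Real.sqrt (1 - ((r+c)/(1+r))^2)))) r := by
    have h := (Real.hasDerivAt_sqrt hxsq.ne').comp r hinner
    refine h.congr_deriv (Eq.symm ?_)
    ring
  have hA : HasDerivAt (fun r : ℝ => 2*(1+r)) 2 r := by
    have h := ((hasDerivAt_id' r).const_add (1:ℝ)).const_mul (2:ℝ)
    refine h.congr_deriv (Eq.symm ?_); norm_num
  have hB : HasDerivAt (fun r : ℝ => Real.arccos ((r+c)/(1+r))
      - ((r+c)/(1+r)) * Real.sqrt (1 - ((r+c)/(1+r))^2))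
      (-(1 / Real.sqrt (1 - ((r+c)/(1+r))^2)) * ((1 - c) / (1 + r)^2)
        - (((1 - c) / (1 + r)^2) * Real.sqrt (1 - ((r+c)/(1+r))^2)
          + ((r+c)/(1+r)) * ((-(2 * ((r+c)/(1+r)) * ((1 - c) / (1 + r)^2))) * (1 / (2 * Real.sqrt (1 - ((r+c)/(1+r))^2)))))) r :=
    harccos.sub (hu.mul hsqrt)
  have h := (hA.mul hB).sub (hsqrt.const_mul (2*(1-c)))
  refine h.congr_deriv (Eq.symm ?_)
  rfl

theorem d2A1_dr2 (φC : ℝ) (hφC : 0 < φC) (hφC' : φC < Real.pi / 2) :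
    deriv (deriv (fun r => A1 φC 0 r)) 0
      = 2 * (φC - 2 * (1 - Real.cos φC) / Real.sin φC) := by
  have hπ : (0:ℝ) < Real.pi := Real.pi_pos
  set c := Real.cos φC with hcdef
  have hc0 : 0 < c := Real.cos_pos_of_mem_Ioo ⟨by linarith, hφC'⟩
  have hc1 : c < 1 := by
    have := Real.cos_lt_cos_of_nonneg_of_le_pi le_rfl (by linarith) hφC
    simpa using this
  have hs0 : 0 < Real.sin φC := Real.sin_pos_of_pos_of_lt_pi hφC (by linarith)
  have hs2 : Real.sin φC ^ 2 = 1 - c ^ 2 := by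
    have := Real.sin_sq_add_cos_sq φC
    nlinarith [this]
  -- rewrite the function
  have hFf : (fun r => A1 φC 0 r) = (fun r : ℝ => (1+r)^2 * Real.arccos ((r+c)/(1+r))
      - (r+c)*(1+r) * Real.sqrt (1 - ((r+c)/(1+r))^2)) := by
    funext r
    simp only [A1, Real.sin_arccos]
    rw [show ((1:ℝ) + r) - (1 - Real.cos φC + 0) = r + c from by rw [hcdef]; ring]
  rw [hFf]
  -- first derivative equals G eventually
  have hball : ∀ᶠ r in nhds (0:ℝ), |r| < 1/2 := by
    have : Set.Ioo (-(1/2):ℝ) (1/2) ∈ nhds (0:ℝ) :=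
      Ioo_mem_nhds (by norm_num) (by norm_num)
    filter_upwards [this] with r hr
    rw [abs_lt]; exact ⟨hr.1, hr.2⟩
  have hEv : deriv (fun r : ℝ => (1+r)^2 * Real.arccos ((r+c)/(1+r))
      - (r+c)*(1+r) * Real.sqrt (1 - ((r+c)/(1+r))^2))
      =ᶠ[nhds (0:ℝ)] (fun r : ℝ => 2*(1+r)*(Real.arccos ((r+c)/(1+r))
        - ((r+c)/(1+r)) * Real.sqrt (1 - ((r+c)/(1+r))^2))
        - 2*(1-c) * Real.sqrt (1 - ((r+c)/(1+r))^2)) := by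
    filter_upwards [hball] with r hr
    exact (aux_deriv1 c hc0 hc1 r hr).deriv
  rw [hEv.deriv_eq]
  have h2 := (aux_deriv2 c hc0 hc1 0 (by norm_num)).deriv
  rw [h2]
  -- now pure computation
  have he : ((0:ℝ)+c)/((1:ℝ)+0) = c := by norm_num
  rw [he]
  have hq : Real.sqrt (1 - c^2) = Real.sin φC := by
    rw [← hs2]
    exact Real.sqrt_sq hs0.le
  rw [hq]
  have harc : Real.arccos c = φC := Real.arccos_cos hφC.le (by linarith)
  rw [harc]
  have hsne : Real.sin φC ≠ 0 := hs0.ne'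
  field_simp
  linear_combination (-1) * hs2
end

section
/- For the 3-parameter segment area Ā₁(d,r,δ) defined by R = 1+r, D = 1−cos(φ_C)+d, φ = arccos(((R−D)/R)·cos(δ)) − δ, Ā₁ = R²φ − (R−D)·R·sin(φ), the partial derivative ∂Ā₁/∂δ at (0,0,0) equals −sin(φ_C)². -/
/-- The 3-parameter disc-segment area: radius `R = 1 + r`, depth `D = 1 - cos φC + d`,
inclination `δ`, half-angle `φ = arccos (((R - D)/R) * cos δ) - δ`. -/
noncomputable def A1bar (φC d r δ : ℝ) : ℝ :=
  (1 + r)^2 * (Real.arccos ((((1 + r) - (1 - Real.cos φC + d)) / (1 + r)) * Real.cos δ) - δ)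
    - ((1 + r) - (1 - Real.cos φC + d)) * (1 + r)
      * Real.sin (Real.arccos ((((1 + r) - (1 - Real.cos φC + d)) / (1 + r)) * Real.cos δ) - δ)

theorem dA1bar_ddelta (φC : ℝ) (hφC : 0 < φC) (hφC' : φC < Real.pi / 2) :
    deriv (fun δ => A1bar φC 0 0 δ) 0 = -(Real.sin φC)^2 := by
  set c := Real.cos φC with hc
  have hπ : 0 < Real.pi / 2 := by positivity
  have hc0 : 0 < c := Real.cos_pos_of_mem_Ioo ⟨by linarith, hφC'⟩
  have hc1 : c < 1 := by
    have := Real.cos_lt_cos_of_nonneg_of_le_pi (le_refl 0) (by linarith [Real.pi_pos]) hφC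
    simpa [hc] using this
  have hfun : (fun δ => A1bar φC 0 0 δ)
      = fun δ => (Real.arccos (c * Real.cos δ) - δ)
          - c * Real.sin (Real.arccos (c * Real.cos δ) - δ) := by
    funext δ
    simp only [A1bar, hc]
    norm_num
  -- derivative of inner function δ ↦ c * cos δ at 0 is 0
  have h1 : HasDerivAt (fun δ => c * Real.cos δ) 0 0 := by
    have := (Real.hasDerivAt_cos 0).const_mul c
    simpa using this
  have harc : HasDerivAt Real.arccos (-(1 / Real.sqrt (1 - c ^ 2))) c :=
    Real.hasDerivAt_arccos (by linarith) (ne_of_lt hc1)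
  have h2 : HasDerivAt (fun δ => Real.arccos (c * Real.cos δ)) 0 0 := by
    have harc' : HasDerivAt Real.arccos (-(1 / Real.sqrt (1 - c ^ 2))) (c * Real.cos 0) := by
      simpa using harc
    have h := HasDerivAt.comp (𝕜 := ℝ) 0 harc' h1
    simpa [Function.comp_def] using h
  have h3 : HasDerivAt (fun δ => Real.arccos (c * Real.cos δ) - δ) (-1) 0 := by
    have := h2.sub (hasDerivAt_id 0)
    simpa [Pi.sub_def] using this
  have harccos : Real.arccos (c * Real.cos 0) - 0 = φC := by
    simp [hc, Real.arccos_cos hφC.le (by linarith [Real.pi_pos])]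
  have h4 : HasDerivAt (fun δ => Real.sin (Real.arccos (c * Real.cos δ) - δ)) (-c) 0 := by
    have := h3.sin
    rw [harccos] at this
    simpa [hc, mul_comm] using this
  have h5 : HasDerivAt (fun δ => (Real.arccos (c * Real.cos δ) - δ)
      - c * Real.sin (Real.arccos (c * Real.cos δ) - δ)) (-1 - c * (-c)) 0 :=
    h3.sub (h4.const_mul c)
  rw [hfun, h5.deriv]
  have hs := Real.sin_sq_add_cos_sq φC
  nlinarith [hs]
end

section
/- For the 3-parameter segment area Ā₁(d,r,δ) as above, the mixed partial derivative ∂²Ā₁/∂d∂δ at (0,0,0) equals −2·cos(φ_C). -/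
noncomputable def gAux (c δ : ℝ) : ℝ :=
  Real.cos δ / Real.sqrt (1 - (c * Real.cos δ)^2)
    + Real.sin (Real.arccos (c * Real.cos δ) - δ)
    - c * Real.cos (Real.arccos (c * Real.cos δ) - δ)
        * (Real.cos δ / Real.sqrt (1 - (c * Real.cos δ)^2))

lemma uBound {c : ℝ} (hc0 : 0 < c) (hc1 : c < 1) (δ : ℝ) :
    |c * Real.cos δ| < 1 := by
  calc |c * Real.cos δ| = c * |Real.cos δ| := by
        rw [abs_mul, abs_of_pos hc0]
    _ ≤ c * 1 := by
        have := Real.abs_cos_le_one δ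
        nlinarith
    _ < 1 := by linarith

lemma innerDeriv {c : ℝ} (hc0 : 0 < c) (hc1 : c < 1) (δ : ℝ) :
    HasDerivAt (fun d => (Real.arccos ((c - d) * Real.cos δ) - δ)
        - (c - d) * Real.sin (Real.arccos ((c - d) * Real.cos δ) - δ)) (gAux c δ) 0 := by
  have hu := uBound hc0 hc1 δ
  set k := Real.cos δ with hk
  set u := c * k with hud
  have h1 : u ≠ 1 := by
    have := abs_lt.mp hu; intro h; linarith [this.2]
  have h2 : u ≠ -1 := by
    have := abs_lt.mp hu; intro h; linarith [this.1]
  have hpos : 0 < 1 - u ^ 2 := by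
    have h := abs_lt.mp hu; nlinarith
  have hs : 0 < Real.sqrt (1 - u ^ 2) := Real.sqrt_pos.mpr hpos
  have hlin : HasDerivAt (fun d : ℝ => (c - d) * k) (-1 * k) 0 :=
    ((hasDerivAt_id 0).const_sub c).mul_const k
  have harc0 : HasDerivAt Real.arccos (-(1 / Real.sqrt (1 - u ^ 2))) ((c - 0) * k) := by
    have e : (c - 0) * k = u := by ring
    rw [e]; exact Real.hasDerivAt_arccos h2 h1
  have hψ : HasDerivAt (fun d => Real.arccos ((c - d) * k))
      (-(1 / Real.sqrt (1 - u ^ 2)) * (-1 * k)) 0 := by have := harc0.comp 0 hlin; exact this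
  have hψδ : HasDerivAt (fun d => Real.arccos ((c - d) * k) - δ)
      (-(1 / Real.sqrt (1 - u ^ 2)) * (-1 * k)) 0 := hψ.sub_const δ
  have hsin : HasDerivAt (fun d => Real.sin (Real.arccos ((c - d) * k) - δ))
      (Real.cos (Real.arccos ((c - 0) * k) - δ) * (-(1 / Real.sqrt (1 - u ^ 2)) * (-1 * k))) 0 :=
    (Real.hasDerivAt_sin _).comp 0 hψδ
  have hid : HasDerivAt (fun d : ℝ => c - d) (-1) 0 := (hasDerivAt_id 0).const_sub c
  have hprod := hid.mul hsin
  have htot := hψδ.sub hprod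
  convert htot using 1
  · rfl
  · rfl
  · rfl
  have e : (c - 0) * k = u := by ring
  rw [e]
  unfold gAux
  rw [← hk, ← hud]
  have hsne : Real.sqrt (1 - u ^ 2) ≠ 0 := ne_of_gt hs
  field_simp
  ring
lemma outerDeriv {c : ℝ} (hc0 : 0 < c) (hc1 : c < 1) :
    HasDerivAt (fun δ => gAux c δ) (-2 * c) 0 := by
  have hu := uBound hc0 hc1 0
  have h1 : c * Real.cos 0 ≠ 1 := by
    have := abs_lt.mp hu; intro h; linarith [this.2]
  have h2 : c * Real.cos 0 ≠ -1 := by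
    have := abs_lt.mp hu; intro h; linarith [this.1]
  have hpos : 0 < 1 - (c * Real.cos 0) ^ 2 := by
    have h := abs_lt.mp hu; nlinarith
  have hne : 1 - (c * Real.cos 0) ^ 2 ≠ 0 := ne_of_gt hpos
  have hs : 0 < Real.sqrt (1 - (c * Real.cos 0) ^ 2) := Real.sqrt_pos.mpr hpos
  have hsne : Real.sqrt (1 - (c * Real.cos 0) ^ 2) ≠ 0 := ne_of_gt hs
  -- basic pieces
  have hk : HasDerivAt Real.cos (-Real.sin 0) 0 := Real.hasDerivAt_cos 0
  have hu' : HasDerivAt (fun δ => c * Real.cos δ) (c * -Real.sin 0) 0 := hk.const_mul c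
  have hu2 : HasDerivAt (fun δ => (c * Real.cos δ) ^ 2)
      (2 * (c * Real.cos 0) ^ 1 * (c * -Real.sin 0)) 0 := hu'.pow 2
  have h1mu2 : HasDerivAt (fun δ => 1 - (c * Real.cos δ) ^ 2)
      (-(2 * (c * Real.cos 0) ^ 1 * (c * -Real.sin 0))) 0 := hu2.const_sub 1
  have hsq : HasDerivAt (fun δ => Real.sqrt (1 - (c * Real.cos δ) ^ 2))
      (1 / (2 * Real.sqrt (1 - (c * Real.cos 0) ^ 2)) * (-(2 * (c * Real.cos 0) ^ 1 * (c * -Real.sin 0)))) 0 :=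
    (Real.hasDerivAt_sqrt hne).comp 0 h1mu2
  have hdiv := hk.div hsq hsne
  have harc0 : HasDerivAt Real.arccos (-(1 / Real.sqrt (1 - (c * Real.cos 0) ^ 2))) (c * Real.cos 0) :=
    Real.hasDerivAt_arccos h2 h1
  have harc : HasDerivAt (fun δ => Real.arccos (c * Real.cos δ))
      (-(1 / Real.sqrt (1 - (c * Real.cos 0) ^ 2)) * (c * -Real.sin 0)) 0 := by have := harc0.comp 0 hu'; exact this
  have hψ : HasDerivAt (fun δ => Real.arccos (c * Real.cos δ) - δ)
      (-(1 / Real.sqrt (1 - (c * Real.cos 0) ^ 2)) * (c * -Real.sin 0) - 1) 0 :=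
    harc.sub (hasDerivAt_id 0)
  have hsinψ : HasDerivAt (fun δ => Real.sin (Real.arccos (c * Real.cos δ) - δ))
      (Real.cos (Real.arccos (c * Real.cos 0) - 0) *
        (-(1 / Real.sqrt (1 - (c * Real.cos 0) ^ 2)) * (c * -Real.sin 0) - 1)) 0 :=
    (Real.hasDerivAt_sin _).comp 0 hψ
  have hcosψ : HasDerivAt (fun δ => Real.cos (Real.arccos (c * Real.cos δ) - δ))
      (-Real.sin (Real.arccos (c * Real.cos 0) - 0) *
        (-(1 / Real.sqrt (1 - (c * Real.cos 0) ^ 2)) * (c * -Real.sin 0) - 1)) 0 :=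
    (Real.hasDerivAt_cos _).comp 0 hψ
  have hterm3 := (hcosψ.const_mul c).mul hdiv
  have htot := (hdiv.add hsinψ).sub hterm3
  have heq : (fun δ => gAux c δ) = fun δ =>
      Real.cos δ / Real.sqrt (1 - (c * Real.cos δ) ^ 2)
        + Real.sin (Real.arccos (c * Real.cos δ) - δ)
        - c * Real.cos (Real.arccos (c * Real.cos δ) - δ)
            * (Real.cos δ / Real.sqrt (1 - (c * Real.cos δ) ^ 2)) := rfl
  rw [heq]
  convert htot using 1
  · rfl
  · rfl
  · rfl
  have hc1' : c ≤ 1 := le_of_lt hc1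
  have hcm1 : -1 ≤ c := by linarith
  rw [Real.cos_zero, Real.sin_zero] at *
  simp only [mul_one, mul_zero, neg_zero, zero_mul, sub_zero, mul_zero, zero_div, Pi.div_apply, Real.cos_zero]
  rw [Real.cos_arccos hcm1 hc1', Real.sin_arccos]
  have hsne2 : Real.sqrt (1 - c ^ 2) ≠ 0 := by simpa using hsne
  field_simp
  ring

theorem d2A1bar_dd_ddelta (φC : ℝ) (hφC : 0 < φC) (hφC' : φC < Real.pi / 2) :
    deriv (fun δ => deriv (fun d => A1bar φC d 0 δ) 0) 0 = -2 * Real.cos φC := by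
  have hc0 : 0 < Real.cos φC := Real.cos_pos_of_mem_Ioo ⟨by linarith [Real.pi_pos], hφC'⟩
  have hc1 : Real.cos φC < 1 := by
    have h := Real.cos_lt_cos_of_nonneg_of_le_pi (le_refl 0) (by linarith [Real.pi_pos]) hφC
    simpa using h
  have hEq : (fun δ => deriv (fun d => A1bar φC d 0 δ) 0) = fun δ => gAux (Real.cos φC) δ := by
    funext δ
    have hF : (fun d => A1bar φC d 0 δ) = fun d =>
        (Real.arccos ((Real.cos φC - d) * Real.cos δ) - δ)
          - (Real.cos φC - d) * Real.sin (Real.arccos ((Real.cos φC - d) * Real.cos δ) - δ) := by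
      funext d
      have harg : (1 + (0:ℝ) - (1 - Real.cos φC + d)) / (1 + 0) = Real.cos φC - d := by ring
      simp only [A1bar, harg]
      ring
    rw [hF]
    exact (innerDeriv hc0 hc1 δ).deriv
  rw [hEq]
  exact (outerDeriv hc0 hc1).deriv
end

section
/- For the 3-parameter segment area Ā₁(d,r,δ) as above, the mixed partial derivative ∂²Ā₁/∂r∂δ at (0,0,0) equals 2·(cos(φ_C) − 1). -/
/-- Closed form of `∂A1bar/∂r` at `r = 0`, `d = 0`, as a function of `δ`, with `c = cos φC`. -/
noncomputable def gA1 (c δ : ℝ) : ℝ :=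
  2 * (Real.arccos (c * Real.cos δ) - δ)
    - (1 - c) * Real.cos δ / Real.sqrt (1 - (c * Real.cos δ)^2)
    - (1 + c) * Real.sin (Real.arccos (c * Real.cos δ) - δ)
    + c * ((1 - c) * Real.cos δ / Real.sqrt (1 - (c * Real.cos δ)^2))
        * Real.cos (Real.arccos (c * Real.cos δ) - δ)

lemma abs_c_cos_lt_one {c : ℝ} (h0 : 0 < c) (h1 : c < 1) (δ : ℝ) :
    |c * Real.cos δ| < 1 := by
  rw [abs_mul, abs_of_pos h0]
  calc c * |Real.cos δ| ≤ c * 1 :=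
        mul_le_mul_of_nonneg_left (Real.abs_cos_le_one δ) h0.le
    _ < 1 := by linarith

lemma one_sub_sq_pos {c : ℝ} (h0 : 0 < c) (h1 : c < 1) (δ : ℝ) :
    0 < 1 - (c * Real.cos δ)^2 := by
  have h := abs_c_cos_lt_one h0 h1 δ
  nlinarith [abs_nonneg (c * Real.cos δ), sq_abs (c * Real.cos δ)]

lemma innerDeriv_s13 (c : ℝ) (h0 : 0 < c) (h1 : c < 1) (δ : ℝ) :
    HasDerivAt (fun r : ℝ =>
      (1 + r)^2 * (Real.arccos ((((1 + r) - (1 - c + 0)) / (1 + r)) * Real.cos δ) - δ)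
        - ((1 + r) - (1 - c + 0)) * (1 + r)
          * Real.sin (Real.arccos ((((1 + r) - (1 - c + 0)) / (1 + r)) * Real.cos δ) - δ))
      (gA1 c δ) 0 := by
  have h1r : HasDerivAt (fun r : ℝ => 1 + r) 1 0 := by
    simpa using (hasDerivAt_id (0:ℝ)).const_add 1
  have hN : HasDerivAt (fun r : ℝ => (1 + r) - (1 - c + 0)) 1 0 := h1r.sub_const _
  have hden : ((1:ℝ) + 0) ≠ 0 := by norm_num
  have hu := (hN.div h1r hden).mul_const (Real.cos δ)
  have e1 : (((1:ℝ) + 0) - (1 - c + 0)) / (1 + 0) * Real.cos δ = c * Real.cos δ := by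
    ring
  have habs : |(((1:ℝ) + 0) - (1 - c + 0)) / (1 + 0) * Real.cos δ| < 1 := by
    rw [e1]; exact abs_c_cos_lt_one h0 h1 δ
  have hne1 : (((1:ℝ) + 0) - (1 - c + 0)) / (1 + 0) * Real.cos δ ≠ 1 :=
    (abs_lt.mp habs).2.ne
  have hnem1 : (((1:ℝ) + 0) - (1 - c + 0)) / (1 + 0) * Real.cos δ ≠ -1 :=
    (abs_lt.mp habs).1.ne'
  have hA := ((Real.hasDerivAt_arccos hnem1 hne1).comp 0 hu).sub_const δ
  have hsq := h1r.pow 2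
  have ht1 := hsq.mul hA
  have hsin := hA.sin
  have hcoef := hN.mul h1r
  have ht2 := hcoef.mul hsin
  have hfull := ht1.sub ht2
  refine hfull.congr_deriv (Eq.symm ?_)
  simp only [Pi.pow_apply, Pi.mul_apply, Pi.div_apply, Pi.sub_apply, Function.comp_apply]
  rw [gA1, e1]
  have hs : Real.sqrt (1 - (c * Real.cos δ)^2) ≠ 0 :=
    (Real.sqrt_pos.mpr (one_sub_sq_pos h0 h1 δ)).ne'
  field_simp
  ring

lemma outerDeriv_s13 (c : ℝ) (h0 : 0 < c) (h1 : c < 1) :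
    HasDerivAt (gA1 c) (2 * (c - 1)) 0 := by
  have hcc : HasDerivAt (fun δ : ℝ => c * Real.cos δ) (c * -Real.sin 0) 0 :=
    (Real.hasDerivAt_cos 0).const_mul c
  have habs : |c * Real.cos 0| < 1 := abs_c_cos_lt_one h0 h1 0
  have hne1 : c * Real.cos 0 ≠ 1 := (abs_lt.mp habs).2.ne
  have hnem1 : c * Real.cos 0 ≠ -1 := (abs_lt.mp habs).1.ne'
  have hA := (Real.hasDerivAt_arccos hnem1 hne1).comp 0 hcc
  have hA' := hA.sub (hasDerivAt_id 0)
  have ht1 := hA'.const_mul (2:ℝ)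
  have hinner := (hcc.pow 2).const_sub (1:ℝ)
  have hSpos : 0 < 1 - (c * Real.cos 0)^2 := one_sub_sq_pos h0 h1 0
  have hS := hinner.sqrt hSpos.ne'
  have hnum : HasDerivAt (fun δ : ℝ => (1 - c) * Real.cos δ) ((1 - c) * -Real.sin 0) 0 :=
    (Real.hasDerivAt_cos 0).const_mul (1 - c)
  have hS0 : Real.sqrt (1 - (c * Real.cos 0)^2) ≠ 0 :=
    (Real.sqrt_pos.mpr hSpos).ne'
  have ht2 := hnum.div hS hS0
  have hsinA := hA'.sin
  have ht3 := hsinA.const_mul (1 + c)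
  have hcosA := hA'.cos
  have ht4 := (ht2.const_mul c).mul hcosA
  have hg := ((ht1.sub ht2).sub ht3).add ht4
  refine hg.congr_deriv (Eq.symm ?_)
  simp only [Pi.pow_apply, Pi.mul_apply, Pi.div_apply, Pi.sub_apply, Function.comp_apply]
  have hc1 : (-1:ℝ) ≤ c := by linarith
  have hc2 : c ≤ 1 := h1.le
  have hsc : Real.sqrt (1 - c^2) ≠ 0 := by
    have : (0:ℝ) < 1 - c^2 := by nlinarith
    exact (Real.sqrt_pos.mpr this).ne'
  simp only [Function.comp_apply, Real.sin_zero, Real.cos_zero, mul_one, mul_zero, neg_zero, zero_mul,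
    sub_zero, zero_div, zero_sub, mul_neg, Real.cos_arccos hc1 hc2,
    Real.sin_arccos, one_pow, pow_one, id_eq, add_zero, zero_add, one_mul]
  field_simp
  nlinarith [Real.sq_sqrt (by nlinarith : (0:ℝ) ≤ 1 - c^2),
    Real.sqrt_nonneg (1 - c^2)]

theorem d2A1bar_dr_ddelta (φC : ℝ) (hφC : 0 < φC) (hφC' : φC < Real.pi / 2) :
    deriv (fun δ => deriv (fun r => A1bar φC 0 r δ) 0) 0 = 2 * (Real.cos φC - 1) := by
  have h0 : 0 < Real.cos φC :=
    Real.cos_pos_of_mem_Ioo ⟨by linarith [Real.pi_pos], hφC'⟩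
  have h1 : Real.cos φC < 1 := by
    have h := Real.cos_lt_cos_of_nonneg_of_le_pi le_rfl
      (by linarith [Real.pi_pos] : φC ≤ Real.pi) hφC
    simpa using h
  have key : ∀ δ, deriv (fun r => A1bar φC 0 r δ) 0 = gA1 (Real.cos φC) δ :=
    fun δ => (innerDeriv_s13 (Real.cos φC) h0 h1 δ).deriv
  have hfun : (fun δ => deriv (fun r => A1bar φC 0 r δ) 0) = gA1 (Real.cos φC) :=
    funext key
  rw [hfun, (outerDeriv_s13 (Real.cos φC) h0 h1).deriv]
end

section
/- For the 3-parameter segment area Ā₁(d,r,δ) as above, the second partial derivative ∂²Ā₁/∂δ² at (0,0,0) equals 2·cos(φ_C)·sin(φ_C). -/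
noncomputable def sfn (c δ : ℝ) : ℝ := Real.sqrt (1 - (c * Real.cos δ)^2)

noncomputable def Gfn (c δ : ℝ) : ℝ :=
  c * Real.sin δ / sfn c δ - 1
    - c * ((c^2 * Real.cos δ * Real.sin δ / sfn c δ) * Real.cos δ - sfn c δ * Real.sin δ
           - c * (Real.cos δ ^ 2 - Real.sin δ ^ 2))

lemma spos (c : ℝ) (hc0 : 0 < c) (hc1 : c < 1) (δ : ℝ) : 0 < 1 - (c * Real.cos δ)^2 := by
  nlinarith [Real.cos_sq_le_one δ, sq_nonneg (Real.cos δ), sq_nonneg c,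
    mul_nonneg (sq_nonneg c) (sub_nonneg.mpr (Real.cos_sq_le_one δ))]

lemma hasDerivAt_G (c : ℝ) (hc0 : 0 < c) (hc1 : c < 1) :
    HasDerivAt (Gfn c) (2 * c * Real.sqrt (1 - c^2)) 0 := by
  have hδ : (0:ℝ) = 0 := rfl
  have hpos := spos c hc0 hc1 (0:ℝ)
  have hsne : sfn c 0 ≠ 0 := ne_of_gt (Real.sqrt_pos.mpr hpos)
  have hcos : HasDerivAt Real.cos (-Real.sin (0:ℝ)) (0:ℝ) := Real.hasDerivAt_cos (0:ℝ)
  have hsin : HasDerivAt Real.sin (Real.cos (0:ℝ)) (0:ℝ) := Real.hasDerivAt_sin (0:ℝ)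
  have hu : HasDerivAt (fun x => c * Real.cos x) (c * -Real.sin (0:ℝ)) (0:ℝ) := hcos.const_mul c
  have hv : HasDerivAt (fun x => 1 - (c * Real.cos x)^2)
      (-((2:ℕ) * (c * Real.cos (0:ℝ)) ^ (2-1) * (c * -Real.sin (0:ℝ)))) (0:ℝ) := (hu.pow 2).const_sub 1
  have hs : HasDerivAt (fun x => sfn c x)
      (1 / (2 * Real.sqrt (1 - (c * Real.cos (0:ℝ))^2)) * -((2:ℕ) * (c * Real.cos (0:ℝ)) ^ (2-1) * (c * -Real.sin (0:ℝ)))) (0:ℝ) :=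
    (Real.hasDerivAt_sqrt (ne_of_gt hpos)).comp (0:ℝ) hv
  set s' := 1 / (2 * Real.sqrt (1 - (c * Real.cos (0:ℝ))^2)) * -((2:ℕ) * (c * Real.cos (0:ℝ)) ^ (2-1) * (c * -Real.sin (0:ℝ))) with hs'
  have h1 : HasDerivAt (fun x => c * Real.sin x / sfn c x)
      (((c * Real.cos (0:ℝ)) * sfn c 0 - (c * Real.sin (0:ℝ)) * s') / (sfn c (0:ℝ))^2) (0:ℝ) :=
    (hsin.const_mul c).div hs hsne
  have h2 : HasDerivAt (fun x => c^2 * Real.cos x * Real.sin x)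
      ((c^2 * -Real.sin (0:ℝ)) * Real.sin 0 + (c^2 * Real.cos (0:ℝ)) * Real.cos (0:ℝ)) (0:ℝ) :=
    ((hcos.const_mul (c^2)).mul hsin)
  have h3 : HasDerivAt (fun x => c^2 * Real.cos x * Real.sin x / sfn c x)
      ((((c^2 * -Real.sin (0:ℝ)) * Real.sin 0 + (c^2 * Real.cos (0:ℝ)) * Real.cos (0:ℝ)) * sfn c (0:ℝ)
        - (c^2 * Real.cos 0 * Real.sin (0:ℝ)) * s') / (sfn c (0:ℝ))^2) (0:ℝ) := h2.div hs hsne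
  have h4 : HasDerivAt (fun x => c^2 * Real.cos x * Real.sin x / sfn c x * Real.cos x)
      (((((c^2 * -Real.sin (0:ℝ)) * Real.sin 0 + (c^2 * Real.cos (0:ℝ)) * Real.cos (0:ℝ)) * sfn c (0:ℝ)
        - (c^2 * Real.cos 0 * Real.sin (0:ℝ)) * s') / (sfn c (0:ℝ))^2) * Real.cos (0:ℝ)
        + (c^2 * Real.cos 0 * Real.sin 0 / sfn c (0:ℝ)) * -Real.sin (0:ℝ)) (0:ℝ) := h3.mul hcos
  have h5 : HasDerivAt (fun x => sfn c x * Real.sin x)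
      (s' * Real.sin 0 + sfn c 0 * Real.cos (0:ℝ)) (0:ℝ) := hs.mul hsin
  have h6 : HasDerivAt (fun x => c * (Real.cos x ^ 2 - Real.sin x ^ 2))
      (c * ((2:ℕ) * Real.cos 0 ^ (2-1) * -Real.sin 0 - (2:ℕ) * Real.sin 0 ^ (2-1) * Real.cos (0:ℝ))) (0:ℝ) :=
    ((hcos.pow 2).sub (hsin.pow 2)).const_mul c
  have hG : HasDerivAt (Gfn c)
      ((((c * Real.cos (0:ℝ)) * sfn c 0 - (c * Real.sin (0:ℝ)) * s') / (sfn c (0:ℝ))^2)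
        - c * ((((((c^2 * -Real.sin (0:ℝ)) * Real.sin 0 + (c^2 * Real.cos (0:ℝ)) * Real.cos (0:ℝ)) * sfn c (0:ℝ)
            - (c^2 * Real.cos 0 * Real.sin (0:ℝ)) * s') / (sfn c (0:ℝ))^2) * Real.cos (0:ℝ)
            + (c^2 * Real.cos 0 * Real.sin 0 / sfn c (0:ℝ)) * -Real.sin (0:ℝ)
            - (s' * Real.sin 0 + sfn c 0 * Real.cos (0:ℝ))
            - c * ((2:ℕ) * Real.cos 0 ^ (2-1) * -Real.sin 0 - (2:ℕ) * Real.sin 0 ^ (2-1) * Real.cos (0:ℝ))))) (0:ℝ) := by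
    have := (h1.sub_const 1).sub (((h4.sub h5).sub h6).const_mul c)
    convert this using 1
    try ring
    all_goals rfl
  convert hG using 1
  have hsq : sfn c 0 ^ 2 = 1 - (c * Real.cos (0:ℝ))^2 := Real.sq_sqrt (le_of_lt hpos)
  have h0 : sfn c 0 = Real.sqrt (1 - c^2) := by simp [sfn, hδ]
  rw [hs', ← h0]
  simp only [Real.sin_zero, Real.cos_zero, mul_zero, zero_mul, mul_one, one_mul, neg_zero,
    zero_div, sub_zero, zero_sub, add_zero, zero_add, neg_neg]
  have hsq' : sfn c 0 ^ 2 = 1 - c^2 := by simpa using hsq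
  rw [hsq']
  have h1c : (1:ℝ) - c^2 ≠ 0 := by nlinarith
  norm_num
  field_simp
  ring

noncomputable def Ffn (c δ : ℝ) : ℝ :=
  Real.arccos (c * Real.cos δ) - δ
    - c * (sfn c δ * Real.cos δ - (c * Real.cos δ) * Real.sin δ)

lemma hasDerivAt_F (c : ℝ) (hc0 : 0 < c) (hc1 : c < 1) (δ : ℝ) :
    HasDerivAt (Ffn c) (Gfn c δ) δ := by
  have hpos := spos c hc0 hc1 δ
  have hsne : sfn c δ ≠ 0 := ne_of_gt (Real.sqrt_pos.mpr hpos)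
  have hne1 : c * Real.cos δ ≠ -1 := by nlinarith
  have hne2 : c * Real.cos δ ≠ 1 := by nlinarith
  have hcos : HasDerivAt Real.cos (-Real.sin δ) δ := Real.hasDerivAt_cos δ
  have hsin : HasDerivAt Real.sin (Real.cos δ) δ := Real.hasDerivAt_sin δ
  have hu : HasDerivAt (fun x => c * Real.cos x) (c * -Real.sin δ) δ := hcos.const_mul c
  have harc : HasDerivAt (fun x => Real.arccos (c * Real.cos x))
      (-(1 / Real.sqrt (1 - (c * Real.cos δ) ^ 2)) * (c * -Real.sin δ)) δ :=
    by have := (Real.hasDerivAt_arccos hne1 hne2).comp δ hu; exact this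
  have hv : HasDerivAt (fun x => 1 - (c * Real.cos x)^2)
      (-((2:ℕ) * (c * Real.cos δ) ^ (2-1) * (c * -Real.sin δ))) δ := (hu.pow 2).const_sub 1
  have hs : HasDerivAt (fun x => sfn c x)
      (1 / (2 * Real.sqrt (1 - (c * Real.cos δ)^2)) * -((2:ℕ) * (c * Real.cos δ) ^ (2-1) * (c * -Real.sin δ))) δ :=
    (Real.hasDerivAt_sqrt (ne_of_gt hpos)).comp δ hv
  have h2 : HasDerivAt (fun x => sfn c x * Real.cos x - (c * Real.cos x) * Real.sin x)
      ((1 / (2 * Real.sqrt (1 - (c * Real.cos δ)^2)) * -((2:ℕ) * (c * Real.cos δ) ^ (2-1) * (c * -Real.sin δ))) * Real.cos δ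
        + sfn c δ * -Real.sin δ
        - ((c * -Real.sin δ) * Real.sin δ + (c * Real.cos δ) * Real.cos δ)) δ :=
    (hs.mul hcos).sub (hu.mul hsin)
  have hF : HasDerivAt (Ffn c)
      ((-(1 / Real.sqrt (1 - (c * Real.cos δ) ^ 2)) * (c * -Real.sin δ)) - 1
        - c * ((1 / (2 * Real.sqrt (1 - (c * Real.cos δ)^2)) * -((2:ℕ) * (c * Real.cos δ) ^ (2-1) * (c * -Real.sin δ))) * Real.cos δ
          + sfn c δ * -Real.sin δ
          - ((c * -Real.sin δ) * Real.sin δ + (c * Real.cos δ) * Real.cos δ))) δ := by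
    exact (harc.sub (hasDerivAt_id δ)).sub (h2.const_mul c)
  convert hF using 1
  have hsq : sfn c δ ^ 2 = 1 - (c * Real.cos δ)^2 := Real.sq_sqrt (le_of_lt hpos)
  unfold Gfn
  unfold sfn at *
  field_simp
  ring


lemma A1bar_eq (φC : ℝ) (hc0 : 0 < Real.cos φC) (hc1 : Real.cos φC < 1) (δ : ℝ) :
    A1bar φC 0 0 δ = Ffn (Real.cos φC) δ := by
  set c := Real.cos φC with hc
  have hb1 : -1 ≤ c * Real.cos δ := by nlinarith [Real.neg_one_le_cos δ, Real.cos_le_one δ]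
  have hb2 : c * Real.cos δ ≤ 1 := by nlinarith [Real.neg_one_le_cos δ, Real.cos_le_one δ]
  have h : ((1:ℝ) + 0 - (1 - c + 0)) / (1 + 0) = c := by ring
  simp only [A1bar, Ffn, ← hc, h]
  rw [Real.sin_sub, Real.sin_arccos, Real.cos_arccos hb1 hb2]
  simp only [sfn]
  ring

theorem d2A1bar_ddelta2 (φC : ℝ) (hφC : 0 < φC) (hφC' : φC < Real.pi / 2) :
    deriv (deriv (fun δ => A1bar φC 0 0 δ)) 0 = 2 * Real.cos φC * Real.sin φC := by
  have hpi := Real.pi_pos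
  have hc0 : 0 < Real.cos φC := Real.cos_pos_of_mem_Ioo ⟨by linarith, hφC'⟩
  have hc1 : Real.cos φC < 1 := by
    have h := Real.cos_lt_cos_of_nonneg_of_le_pi (le_refl 0) (by linarith [Real.pi_pos]) hφC
    simpa using h
  set c := Real.cos φC with hc
  have hfun : (fun δ => A1bar φC 0 0 δ) = Ffn c := funext (A1bar_eq φC hc0 hc1)
  rw [hfun]
  have hd1 : deriv (Ffn c) = Gfn c := funext (fun δ => (hasDerivAt_F c hc0 hc1 δ).deriv)
  rw [hd1, (hasDerivAt_G c hc0 hc1).deriv]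
  have hsin : Real.sqrt (1 - c^2) = Real.sin φC := by
    rw [show (1:ℝ) - c^2 = Real.sin φC ^ 2 by have := Real.sin_sq_add_cos_sq φC; linarith [this]]
    exact Real.sqrt_sq (Real.sin_nonneg_of_nonneg_of_le_pi (le_of_lt hφC) (by linarith))
  rw [hsin]
end
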